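/- Let n ≥ 1, let ω = e^{2πi/3}, and let (h_{i,j}, v_{i,j}, d_{i,j})_{1≤i,j≤n} be an Alternating Phase Matrix of type 1, of type 2, or of type 3. Then the complex entries a_{i,j} := −ω·h_{i,j} + ω²·v_{i,j} satisfy Σ_{i,j=1}^{n} a_{i,j} = n. -/

import Mathlib

namespace APM

/-- `AltOn s f a b`: reading the values `f j` for `j ∈ s` in increasing order,
the nonzero values strictly alternate in sign, the first one being `a` and the
last one being `b` (vacuously true if all values on `s` are zero). -/
def AltOn (s : Finset ℤ) (f : ℤ → ℤ) (a b : ℤ) : Prop :=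
  (∀ j₁ ∈ s, ∀ j₂ ∈ s, j₁ < j₂ → f j₁ ≠ 0 → f j₂ ≠ 0 →
    (∀ j ∈ s, j₁ < j → j < j₂ → f j = 0) → f j₂ = -f j₁) ∧
  (∀ j₀ ∈ s, f j₀ ≠ 0 → (∀ j ∈ s, j < j₀ → f j = 0) → f j₀ = a) ∧
  (∀ j₀ ∈ s, f j₀ ≠ 0 → (∀ j ∈ s, j₀ < j → f j = 0) → f j₀ = b)

/-- An APM datum: entries `(h,v,d) ∈ {-1,0,1}³` with `h + v + d = 0` on the
grid `[1,n] × [1,n]`. -/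
def IsAPMDatum (n : ℕ) (h v d : ℤ → ℤ → ℤ) : Prop :=
  ∀ i ∈ Finset.Icc (1 : ℤ) n, ∀ j ∈ Finset.Icc (1 : ℤ) n,
    h i j ∈ ({-1, 0, 1} : Set ℤ) ∧ v i j ∈ ({-1, 0, 1} : Set ℤ) ∧
    d i j ∈ ({-1, 0, 1} : Set ℤ) ∧ h i j + v i j + d i j = 0

/-- Conditions (1), (2), (3) common to APM of types 1, 2, 3. -/
def APMCommon (n : ℕ) (h v : ℤ → ℤ → ℤ) : Prop :=
  (∀ i ∈ Finset.Icc (1 : ℤ) n, ∃ j ∈ Finset.Icc (1 : ℤ) n, h i j ≠ 0) ∧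
  (∀ j ∈ Finset.Icc (1 : ℤ) n, ∃ i ∈ Finset.Icc (1 : ℤ) n, v i j ≠ 0) ∧
  (∀ i ∈ Finset.Icc (1 : ℤ) n, AltOn (Finset.Icc 1 n) (fun j => h i j) 1 1) ∧
  (∀ j ∈ Finset.Icc (1 : ℤ) n, AltOn (Finset.Icc 1 n) (fun i => v i j) (-1) (-1))

/-- Row indices of the diagonal `{(i, i+ℓ)}` of the `[1,n]²` grid. -/
noncomputable def diagSet (n : ℕ) (ℓ : ℤ) : Finset ℤ :=
  Finset.Icc (max 1 (1 - ℓ)) (min (n : ℤ) ((n : ℤ) - ℓ))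

/-- Type-1 diagonal alternation conditions. -/
def APMDiag1 (n : ℕ) (d : ℤ → ℤ → ℤ) : Prop :=
  ∀ ℓ ∈ Finset.Icc (1 - (n : ℤ)) ((n : ℤ) - 1),
    (0 < ℓ → AltOn (diagSet n ℓ) (fun i => d i (i + ℓ)) (-1) 1) ∧
    (ℓ ≤ 0 → AltOn (diagSet n ℓ) (fun i => d i (i + ℓ)) 1 (-1))

/-- Type-2 diagonal alternation conditions. -/
def APMDiag2 (n : ℕ) (d : ℤ → ℤ → ℤ) : Prop :=
  ∀ ℓ ∈ Finset.Icc (1 - (n : ℤ)) ((n : ℤ) - 1),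
    (0 ≤ ℓ → AltOn (diagSet n ℓ) (fun i => d i (i + ℓ)) (-1) 1) ∧
    (ℓ < 0 → AltOn (diagSet n ℓ) (fun i => d i (i + ℓ)) 1 (-1))

/-- Type-3 diagonal alternation conditions. -/
def APMDiag3 (n : ℕ) (d : ℤ → ℤ → ℤ) : Prop :=
  ∀ ℓ ∈ Finset.Icc (1 - (n : ℤ)) ((n : ℤ) - 1),
    AltOn (diagSet n ℓ) (fun i => d i (i + ℓ)) (-1) 1

/-- Alternating Phase Matrix of type 4. -/
def APMType4 (n : ℕ) (h v d : ℤ → ℤ → ℤ) : Prop :=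
  IsAPMDatum n h v d ∧
  (∀ i ∈ Finset.Icc (1 : ℤ) n, AltOn (Finset.Icc 1 n) (fun j => h i j) 1 (-1)) ∧
  (∀ j ∈ Finset.Icc (1 : ℤ) n, AltOn (Finset.Icc 1 n) (fun i => v i j) 1 (-1)) ∧
  APMDiag3 n d

/-- `ω = e^{2πi/3}`. -/
noncomputable def ω : ℂ := Complex.exp (2 * Real.pi * Complex.I / 3)

/-- The complex APM entry `a_{i,j} = -ω h_{i,j} + ω² v_{i,j}`. -/
noncomputable def apmEntry (h v : ℤ → ℤ → ℤ) (i j : ℤ) : ℂ :=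
  -ω * (h i j : ℂ) + ω ^ 2 * (v i j : ℂ)

end APM

/-!
Dropping the last nonzero term of a sequence whose nonzero terms alternate from `a` to `b`
leaves one alternating from `a` to `-b`, so by induction twice its sum is `a + b`. Hence every
row of `h` sums to `1` and every column of `v` to `-1`, and the total is
`-ω n - ω² n = n` because `1 + ω + ω² = 0`.
-/

namespace APM

open Finset

section AltOn

variable {s : Finset ℤ} {f : ℤ → ℤ} {a b m : ℤ}

lemma AltOn.of_insert {c : ℤ} (hm : ∀ x ∈ s, x < m) (h : AltOn (insert m s) f a b)
    (hlast : ∀ j₀ ∈ s, f j₀ ≠ 0 → (∀ j ∈ s, j₀ < j → f j = 0) → f j₀ = c) :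
    AltOn s f a c := by
  obtain ⟨hpair, hfirst, -⟩ := h
  refine ⟨fun j₁ hj₁ j₂ hj₂ hlt h₁ h₂ hbetween => ?_, fun j₀ hj₀ h₀ hbefore => ?_, hlast⟩
  · refine hpair j₁ (mem_insert_of_mem hj₁) j₂ (mem_insert_of_mem hj₂) hlt h₁ h₂ ?_
    intro j hj h₁j hjj₂
    rcases mem_insert.1 hj with rfl | hj
    · exact absurd (hjj₂.trans (hm j₂ hj₂)) (lt_irrefl _)
    · exact hbetween j hj h₁j hjj₂
  · refine hfirst j₀ (mem_insert_of_mem hj₀) h₀ fun j hj hjj₀ => ?_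
    rcases mem_insert.1 hj with rfl | hj
    · exact absurd (hjj₀.trans (hm j₀ hj₀)) (lt_irrefl _)
    · exact hbefore j hj hjj₀

lemma AltOn.of_insert_of_eq_zero (hm : ∀ x ∈ s, x < m) (hfm : f m = 0)
    (h : AltOn (insert m s) f a b) : AltOn s f a b :=
  h.of_insert hm fun j₀ hj₀ h₀ hafter => h.2.2 j₀ (mem_insert_of_mem hj₀) h₀ fun j hj hj₀j =>
    (mem_insert.1 hj).elim (fun hjm => hjm ▸ hfm) fun hj => hafter j hj hj₀j

lemma AltOn.of_insert_of_ne_zero (hm : ∀ x ∈ s, x < m) (hfm : f m ≠ 0)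
    (h : AltOn (insert m s) f a b) : AltOn s f a (-f m) := by
  refine h.of_insert hm fun j₀ hj₀ h₀ hafter => ?_
  have := h.1 j₀ (mem_insert_of_mem hj₀) m (mem_insert_self m s) (hm j₀ hj₀) h₀ hfm
    fun j hj hj₀j hjm => (mem_insert.1 hj).elim (fun hjm' => absurd hjm (by omega))
      fun hj => hafter j hj hj₀j
  omega

theorem AltOn.two_mul_sum_eq (h : AltOn s f a b) (hne : ∃ j ∈ s, f j ≠ 0) :
    2 * ∑ j ∈ s, f j = a + b := by
  induction s using Finset.induction_on_max generalizing b with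
  | empty => simp at hne
  | insert m s hm ih =>
    have hms : m ∉ s := fun hms => (hm m hms).false
    rw [sum_insert hms]
    by_cases hfm : f m = 0
    · have hne' : ∃ j ∈ s, f j ≠ 0 := by
        obtain ⟨j, hj, hfj⟩ := hne
        rcases mem_insert.1 hj with rfl | hj
        · exact absurd hfm hfj
        · exact ⟨j, hj, hfj⟩
      rw [hfm, zero_add]
      exact ih (h.of_insert_of_eq_zero hm hfm) hne'
    have hb : f m = b := h.2.2 m (mem_insert_self m s) hfm fun j hj hmj =>
      (mem_insert.1 hj).elim (fun hjm => absurd hmj (by omega))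
        fun hj => absurd (hm j hj) (by omega)
    by_cases hs : ∃ j ∈ s, f j ≠ 0
    · have := ih (h.of_insert_of_ne_zero hm hfm) hs
      omega
    · push Not at hs
      have ha : f m = a := h.2.1 m (mem_insert_self m s) hfm fun j hj _ =>
        (mem_insert.1 hj).elim (fun hjm => absurd hjm (by omega)) (hs j)
      rw [sum_eq_zero hs]
      omega

theorem AltOn.sum_eq (h : AltOn s f a a) (hne : ∃ j ∈ s, f j ≠ 0) :
    ∑ j ∈ s, f j = a := by
  have := h.two_mul_sum_eq hne
  omega

end AltOn

section APMCommon

variable {n : ℕ} {h v : ℤ → ℤ → ℤ}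

theorem APMCommon.sum_h (hcom : APMCommon n h v) :
    ∑ i ∈ Icc (1 : ℤ) n, ∑ j ∈ Icc (1 : ℤ) n, h i j = n := by
  rw [sum_congr rfl fun i hi => (hcom.2.2.1 i hi).sum_eq (hcom.1 i hi)]
  simp

theorem APMCommon.sum_v (hcom : APMCommon n h v) :
    ∑ i ∈ Icc (1 : ℤ) n, ∑ j ∈ Icc (1 : ℤ) n, v i j = -n := by
  rw [sum_comm, sum_congr rfl fun j hj => (hcom.2.2.2 j hj).sum_eq (hcom.2.1 j hj)]
  simp

end APMCommon

theorem omega_sq_add_omega_add_one : ω ^ 2 + ω + 1 = 0 := by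
  have hω : IsPrimitiveRoot ω 3 := by
    simpa [ω] using Complex.isPrimitiveRoot_exp 3 (by norm_num)
  have hsum := hω.geom_sum_eq_zero (by norm_num)
  simp only [sum_range_succ, sum_range_zero, pow_zero, pow_one] at hsum
  linear_combination hsum

theorem sum_apmEntry (s t : Finset ℤ) (h v : ℤ → ℤ → ℤ) :
    ∑ i ∈ s, ∑ j ∈ t, apmEntry h v i j =
      -ω * ((∑ i ∈ s, ∑ j ∈ t, h i j : ℤ) : ℂ) + ω ^ 2 * ((∑ i ∈ s, ∑ j ∈ t, v i j : ℤ) : ℂ) := by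
  simp only [apmEntry, sum_add_distrib, ← mul_sum]
  push_cast
  ring

theorem apm_type123_sum_eq_n_general (n : ℕ) (h v : ℤ → ℤ → ℤ)
    (hcom : APMCommon n h v) :
    ∑ i ∈ Finset.Icc (1 : ℤ) n, ∑ j ∈ Finset.Icc (1 : ℤ) n, apmEntry h v i j
      = (n : ℂ) := by
  rw [sum_apmEntry, hcom.sum_h, hcom.sum_v]
  push_cast
  linear_combination (-(n : ℂ)) * omega_sq_add_omega_add_one

/-- For an Alternating Phase Matrix of type 1, 2 or 3, the sum
of the complex entries `a_{i,j} = -ω h_{i,j} + ω² v_{i,j}` equals `n`. -/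
theorem apm_type123_sum_eq_n (n : ℕ) (hn : 1 ≤ n) (h v d : ℤ → ℤ → ℤ)
    (hdat : IsAPMDatum n h v d) (hcom : APMCommon n h v)
    (htype : APMDiag1 n d ∨ APMDiag2 n d ∨ APMDiag3 n d) :
    ∑ i ∈ Finset.Icc (1 : ℤ) n, ∑ j ∈ Finset.Icc (1 : ℤ) n, apmEntry h v i j
      = (n : ℂ) :=
  apm_type123_sum_eq_n_general n h v hcom

end APM
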